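/- arXiv:1208.2858 — 2 statements merged into one kernel-verified Lean document; each statement's English description precedes it below -/
import Mathlib

section
/- In a free group F, n-th roots are unique: if x, y ∈ F and n ≥ 1 satisfy xⁿ = yⁿ, then x = y. -/
namespace StmtNine

open FreeGroup List

variable {α : Type*}

/-- Two adjacent letters do not cancel. -/
def UR (p q : α × Bool) : Prop := ¬(p.1 = q.1 ∧ p.2 = !q.2)

lemma invRev_cons (p : α × Bool) (L : List (α × Bool)) :
    invRev (p :: L) = invRev L ++ [(p.1, !p.2)] := by
  simp [invRev]

lemma invRev_singleton (p : α × Bool) : invRev [p] = [(p.1, !p.2)] := by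
  simp [invRev]

lemma reduce_eq_self [DecidableEq α] {L : List (α × Bool)} (h : List.Chain' UR L) :
    reduce L = L := by
  rcases Relation.ReflTransGen.cases_head (FreeGroup.reduce.red (L := L)) with h1 | ⟨M, hstep, -⟩
  · exact h1.symm
  · exfalso
    cases hstep with
    | @not L₁ L₂ x b =>
      have h2 := (List.isChain_append.mp h).2.1
      have h3 := (List.isChain_cons_cons.mp h2).1
      exact h3 ⟨rfl, by simp⟩

lemma chain'_reduce [DecidableEq α] (L : List (α × Bool)) : List.Chain' UR (reduce L) := by
  by_contra hc
  rw [show List.Chain' UR = List.IsChain UR from rfl, List.isChain_iff_getElem] at hc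
  push_neg at hc
  obtain ⟨i, hi, hR⟩ := hc
  simp only [UR, not_not, List.get_eq_getElem] at hR
  set M := reduce L with hM
  have hi1 : i < M.length := by omega
  have hi2 : i + 1 < M.length := by omega
  have hsplit : M = M.take i ++ M[i] :: M[i + 1] :: M.drop (i + 2) := by
    have e1 := List.take_append_drop i M
    rw [List.drop_eq_getElem_cons hi1, List.drop_eq_getElem_cons hi2] at e1
    exact e1.symm
  have hq : M[i + 1] = (M[i].1, !M[i].2) := by
    rw [Prod.ext_iff]
    refine ⟨hR.1.symm, ?_⟩
    rw [hR.2, Bool.not_not]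
  rw [hq] at hsplit
  have hfin : reduce L =
      M.take i ++ (M[i].1, M[i].2) :: (M[i].1, !M[i].2) :: M.drop (i + 2) := by
    rw [← hM]; exact hsplit
  exact FreeGroup.reduce.not hfin

lemma chain'_toWord [DecidableEq α] (x : FreeGroup α) : List.Chain' UR x.toWord := by
  have := chain'_reduce (α := α) x.toWord
  rwa [reduce_toWord] at this

lemma toWord_mk' [DecidableEq α] {L : List (α × Bool)} (h : List.Chain' UR L) :
    (mk L).toWord = L := by
  rw [toWord_mk, reduce_eq_self h]

lemma exists_append_singleton {β : Type*} {T : List β} (h : T ≠ []) :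
    ∃ M c, T = M ++ [c] := by
  obtain ⟨M, c, hc⟩ := (List.eq_nil_or_concat T).resolve_left h
  exact ⟨M, c, by rw [hc, List.concat_eq_append]⟩

lemma getLast?_cons_append (q p : α × Bool) (M : List (α × Bool)) :
    (q :: M ++ [p]).getLast? = some p := by
  show ((q :: M) ++ [p]).getLast? = some p
  exact List.getLast?_concat

lemma head?_flatten {C : List (α × Bool)} (hC : C ≠ []) {n : ℕ} (hn : 1 ≤ n) :
    ((List.replicate n C).flatten).head? = C.head? := by
  obtain ⟨m, rfl⟩ : ∃ m, n = m + 1 := ⟨n - 1, by omega⟩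
  rw [List.replicate_succ, List.flatten_cons, List.head?_append]
  obtain ⟨c, T, rfl⟩ := List.exists_cons_of_ne_nil hC
  simp

lemma getLast?_flatten {C : List (α × Bool)} (hC : C ≠ []) : ∀ {n : ℕ}, 1 ≤ n →
    ((List.replicate n C).flatten).getLast? = C.getLast? := by
  intro n
  induction n with
  | zero => omega
  | succ m ih =>
    intro _
    rw [List.replicate_succ, List.flatten_cons, List.getLast?_append]
    rcases Nat.eq_zero_or_pos m with rfl | hm
    · simp
    · rw [ih hm]
      obtain ⟨T, c, rfl⟩ := exists_append_singleton hC
      rw [List.getLast?_concat]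
      rfl

lemma flatten_ne_nil {C : List (α × Bool)} (hC : C ≠ []) {n : ℕ} (hn : 1 ≤ n) :
    (List.replicate n C).flatten ≠ [] := by
  obtain ⟨m, rfl⟩ : ∃ m, n = m + 1 := ⟨n - 1, by omega⟩
  rw [List.replicate_succ, List.flatten_cons]
  simp [hC]

lemma join_reduced {C : List (α × Bool)} (h : List.Chain' UR (C ++ C)) (n : ℕ) :
    List.Chain' UR ((List.replicate n C).flatten) := by
  by_cases hC : C = []
  · subst hC
    have : (List.replicate n ([] : List (α × Bool))).flatten = [] := by
      rw [List.flatten_eq_nil_iff]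
      intro l hl
      simpa using List.eq_of_mem_replicate hl
    rw [this]
    exact List.isChain_nil
  · induction n with
    | zero => exact List.isChain_nil
    | succ m ih =>
      rw [List.replicate_succ, List.flatten_cons]
      refine List.isChain_append.mpr ⟨(List.isChain_append.mp h).1, ih, ?_⟩
      intro p hp q hq
      rcases Nat.eq_zero_or_pos m with rfl | hm
      · simp at hq
      · rw [head?_flatten hC hm] at hq
        exact (List.isChain_append.mp h).2.2 p hp q hq

lemma U_eq_nil {U : List (α × Bool)} (h : List.Chain' UR (U ++ invRev U)) : U = [] := by
  by_contra hU
  obtain ⟨T, u, rfl⟩ := exists_append_singleton hU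
  have hinv : invRev (T ++ [u]) = (u.1, !u.2) :: invRev T := by simp [invRev]
  obtain ⟨-, -, hj⟩ := List.isChain_append.mp h
  have := hj u (by rw [List.getLast?_concat]; rfl) (u.1, !u.2) (by rw [hinv]; rfl)

  exact this ⟨rfl, by simp⟩

lemma ends_split {L : List (α × Bool)} {q p : α × Bool} (hL : List.Chain' UR L)
    (hq : L.head? = some q) (hp : L.getLast? = some p) (hpq : p = (q.1, !q.2)) :
    ∃ M, List.Chain' UR M ∧ L = q :: M ++ [p] ∧ L.length = M.length + 2 := by
  obtain ⟨T, rfl⟩ : ∃ T, L = q :: T := by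
    cases L with
    | nil => simp at hq
    | cons a T =>
      have ha : a = q := by simpa using hq
      exact ⟨T, by rw [ha]⟩
  have hT : T ≠ [] := by
    rintro rfl
    have hqp : q = p := by simpa using hp
    have h2 := congrArg Prod.snd (hqp.trans hpq)
    simp at h2
  obtain ⟨M, c, rfl⟩ := exists_append_singleton hT
  obtain rfl : c = p := by
    have hp2 : ((q :: M) ++ [c]).getLast? = some p := hp
    rw [List.getLast?_concat] at hp2
    exact Option.some.inj hp2
  refine ⟨M, hL.infix ⟨[q], [c], rfl⟩, rfl, by simp⟩

lemma cyc_decomp [DecidableEq α] : ∀ (k : ℕ) (L : List (α × Bool)), L.length ≤ k →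
    List.Chain' UR L → ∃ U C, List.Chain' UR (C ++ C) ∧ L = U ++ C ++ invRev U := by
  intro k
  induction k with
  | zero =>
    intro L hl _
    rw [Nat.le_zero, List.length_eq_zero_iff] at hl
    subst hl
    exact ⟨[], [], List.isChain_nil, by simp [invRev]⟩
  | succ k ih =>
    intro L hlen hL
    by_cases hCR : List.Chain' UR (L ++ L)
    · exact ⟨[], L, hCR, by simp [invRev]⟩
    · rw [show List.Chain' UR = List.IsChain UR from rfl, List.isChain_append] at hCR
      push_neg at hCR
      obtain ⟨p, hp, q, hq, hpq⟩ := hCR hL hL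
      simp only [UR, not_not] at hpq
      have hpq' : p = (q.1, !q.2) := Prod.ext_iff.mpr hpq
      obtain ⟨M, hM, hdec, hlen2⟩ := ends_split hL (Option.mem_def.mp hq)
        (Option.mem_def.mp hp) hpq'
      have hMlen : M.length ≤ k := by omega
      obtain ⟨U', C, hCC, hMdec⟩ := ih M hMlen hM
      refine ⟨q :: U', C, hCC, ?_⟩
      rw [hdec, hMdec, invRev_cons, hpq']
      simp [List.append_assoc]

lemma pow_word [DecidableEq α] {U C : List (α × Bool)}
    (hL : List.Chain' UR (U ++ C ++ invRev U)) (hC : List.Chain' UR (C ++ C))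
    (hC0 : C ≠ []) {n : ℕ} (hn : 1 ≤ n) :
    (mk (U ++ C ++ invRev U)) ^ n = mk (U ++ (List.replicate n C).flatten ++ invRev U)
    ∧ List.Chain' UR (U ++ (List.replicate n C).flatten ++ invRev U) := by
  constructor
  · have h1 : mk (U ++ C ++ invRev U) = mk U * mk C * (mk U)⁻¹ := by
      rw [inv_mk, mul_mk, mul_mk]
    rw [h1, conj_pow, pow_mk, inv_mk, mul_mk, mul_mk]
  · rw [List.append_assoc] at hL ⊢
    obtain ⟨hU, hCU, hjU⟩ := List.isChain_append.mp hL
    obtain ⟨hCc, hUi, hjC⟩ := List.isChain_append.mp hCU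
    refine List.isChain_append.mpr ⟨hU, List.isChain_append.mpr ⟨join_reduced hC n, hUi, ?_⟩, ?_⟩
    · intro p hp q hq
      refine hjC p ?_ q hq
      rwa [getLast?_flatten hC0 hn] at hp
    · intro p hp q hq
      refine hjU p hp q ?_
      rw [List.head?_append] at hq ⊢
      rwa [head?_flatten hC0 hn] at hq

lemma pow_key [DecidableEq α] {z : FreeGroup α} (hz : z ≠ 1) {n : ℕ} (hn : 1 ≤ n) :
    z ^ n ≠ 1 ∧ (z ^ n).toWord.head? = z.toWord.head?
      ∧ (z ^ n).toWord.getLast? = z.toWord.getLast? := by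
  obtain ⟨U, C, hCC, hdec⟩ := cyc_decomp z.toWord.length z.toWord le_rfl (chain'_toWord z)
  have hC0 : C ≠ [] := by
    rintro rfl
    have hw := chain'_toWord z
    rw [hdec, List.append_nil] at hw
    have hU := U_eq_nil hw
    apply hz
    rw [← toWord_eq_nil_iff, hdec, hU]
    simp [invRev]
  have hw := chain'_toWord z
  rw [hdec] at hw
  have hpw := pow_word hw hCC hC0 hn
  have hzn : z ^ n = mk (U ++ (List.replicate n C).flatten ++ invRev U) := by
    conv_lhs => rw [← mk_toWord (x := z), hdec]
    exact hpw.1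
  have htw : (z ^ n).toWord = U ++ (List.replicate n C).flatten ++ invRev U := by
    rw [hzn, toWord_mk' hpw.2]
  refine ⟨?_, ?_, ?_⟩
  · intro h1
    rw [h1, toWord_one] at htw
    have h2 := htw.symm
    simp only [List.append_eq_nil_iff] at h2
    exact flatten_ne_nil hC0 hn h2.1.2
  · rw [htw, hdec]
    simp [List.head?_append, head?_flatten hC0 hn]
  · rw [htw, hdec]
    simp [List.getLast?_append, getLast?_flatten hC0 hn]

lemma aux [DecidableEq α] : ∀ (k : ℕ) (x y : FreeGroup α) {n : ℕ}, 1 ≤ n →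
    x.toWord.length + y.toWord.length ≤ k → x ^ n = y ^ n → x = y := by
  intro k
  induction k with
  | zero =>
    intro x y n hn hlen h
    have hx : x = 1 := by
      rw [← toWord_eq_nil_iff, ← List.length_eq_zero_iff]; omega
    have hy : y = 1 := by
      rw [← toWord_eq_nil_iff, ← List.length_eq_zero_iff]; omega
    rw [hx, hy]
  | succ k ih =>
    intro x y n hn hlen h
    by_cases hx1 : x = 1
    · subst hx1
      by_contra hy1
      have hy1' : y ≠ 1 := fun hh => hy1 hh.symm
      exact (pow_key hy1' hn).1 (by rw [← h, one_pow])
    by_cases hy1 : y = 1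
    · subst hy1
      exact absurd (by rw [h, one_pow]) ((pow_key hx1 hn).1)
    have key : ∀ x y : FreeGroup α, x ≠ 1 → y ≠ 1 →
        x.toWord.length + y.toWord.length ≤ k + 1 → x ^ n = y ^ n →
        ¬ List.Chain' UR (x.toWord ++ x.toWord) → x = y := by
      intro x y hx1 hy1 hlen h hxc
      have hX := chain'_toWord x
      rw [show List.Chain' UR = List.IsChain UR from rfl, List.isChain_append] at hxc
      push_neg at hxc
      obtain ⟨p, hp, q, hq, hpq⟩ := hxc hX hX
      simp only [UR, not_not] at hpq
      have hpq' : p = (q.1, !q.2) := Prod.ext_iff.mpr hpq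
      obtain ⟨M, hM, hXdec, hXlen⟩ := ends_split hX (Option.mem_def.mp hq)
        (Option.mem_def.mp hp) hpq'
      have hkx := pow_key hx1 hn
      have hky := pow_key hy1 hn
      have hyq : y.toWord.head? = some q := by
        rw [← hky.2.1, ← h, hkx.2.1, hXdec]; rfl
      have hyp : y.toWord.getLast? = some p := by
        rw [← hky.2.2, ← h, hkx.2.2, hXdec]
        exact getLast?_cons_append q p M
      obtain ⟨M', hM', hYdec, hYlen⟩ := ends_split (chain'_toWord y) hyq hyp hpq'
      have hx : x = mk [q] * mk M * (mk [q])⁻¹ := by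
        rw [inv_mk, invRev_singleton, mul_mk, mul_mk, ← hpq']
        have e : ([q] ++ M) ++ [p] = q :: M ++ [p] := by simp
        rw [e, ← hXdec, mk_toWord]
      have hy : y = mk [q] * mk M' * (mk [q])⁻¹ := by
        rw [inv_mk, invRev_singleton, mul_mk, mul_mk, ← hpq']
        have e : ([q] ++ M') ++ [p] = q :: M' ++ [p] := by simp
        rw [e, ← hYdec, mk_toWord]
      have hmn : (mk M) ^ n = (mk M') ^ n := by
        have h2 := h
        rw [hx, hy, conj_pow, conj_pow] at h2
        exact mul_left_cancel (mul_right_cancel h2)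
      have hMw : (mk M).toWord = M := toWord_mk' hM
      have hM'w : (mk M').toWord = M' := toWord_mk' hM'
      have hmm : mk M = mk M' := ih (mk M) (mk M') hn (by rw [hMw, hM'w]; omega) hmn
      rw [hx, hy, hmm]
    by_cases hxc : List.Chain' UR (x.toWord ++ x.toWord)
    · by_cases hyc : List.Chain' UR (y.toWord ++ y.toWord)
      · -- both cyclically reduced
        have hxw : (x ^ n).toWord = (List.replicate n x.toWord).flatten := by
          conv_lhs => rw [← mk_toWord (x := x)]
          rw [pow_mk]
          exact toWord_mk' (join_reduced hxc n)
        have hyw : (y ^ n).toWord = (List.replicate n y.toWord).flatten := by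
          conv_lhs => rw [← mk_toWord (x := y)]
          rw [pow_mk]
          exact toWord_mk' (join_reduced hyc n)
        have heq : (List.replicate n x.toWord).flatten = (List.replicate n y.toWord).flatten := by
          rw [← hxw, ← hyw, h]
        have hlen2 : n * x.toWord.length = n * y.toWord.length := by
          have hl := congrArg List.length heq
          simpa [List.length_flatten, List.map_replicate, List.sum_replicate, smul_eq_mul]
            using hl
        have hxy : x.toWord.length = y.toWord.length :=
          Nat.eq_of_mul_eq_mul_left (by omega) hlen2
        obtain ⟨m, rfl⟩ : ∃ m, n = m + 1 := ⟨n - 1, by omega⟩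
        rw [List.replicate_succ, List.flatten_cons, List.replicate_succ,
          List.flatten_cons] at heq
        have hxyw : x.toWord = y.toWord := by
          have h1 := congrArg (List.take x.toWord.length) heq
          rwa [List.take_left, hxy, List.take_left] at h1
        exact toWord_injective hxyw
      · exact (key y x hy1 hx1 (by omega) h.symm hyc).symm
    · exact key x y hx1 hy1 hlen h hxc

end StmtNine

/-- Roots are unique in a free group: `xⁿ = yⁿ` with `n ≥ 1` implies `x = y`. -/
theorem stmt_9 {α : Type*} (x y : FreeGroup α) (n : ℕ) (hn : 1 ≤ n)
    (h : x ^ n = y ^ n) : x = y := by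
  haveI := Classical.decEq α
  exact StmtNine.aux (x.toWord.length + y.toWord.length) x y hn le_rfl h
end

section
/- In a free group F, if two elements x and y commute, then they generate a cyclic subgroup; equivalently, there exists z ∈ F with x and y both powers of z. -/
lemma aux_zpow {ι : Type*} [Subsingleton ι] (i : ι) (g : FreeGroup ι) :
    ∃ n : ℤ, g = FreeGroup.of i ^ n := by
  induction g using FreeGroup.induction_on with
  | C1 => exact ⟨0, by simp⟩
  | of x => exact ⟨1, by rw [Subsingleton.elim x i, zpow_one]⟩
  | inv_of x hx => obtain ⟨n, hn⟩ := hx; exact ⟨-n, by rw [hn, ← zpow_neg]⟩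
  | mul a b ha hb =>
      obtain ⟨n, hn⟩ := ha; obtain ⟨m, hm⟩ := hb
      exact ⟨n + m, by rw [hn, hm, zpow_add]⟩

lemma aux_notcomm {ι : Type*} {i j : ι} (hij : i ≠ j) :
    ¬ Commute (FreeGroup.of i) (FreeGroup.of j) := by
  intro hc
  letI := Classical.decEq ι
  set a : Equiv.Perm (Fin 3) := Equiv.swap 0 1 with ha
  set b : Equiv.Perm (Fin 3) := Equiv.swap 1 2 with hb
  set f : ι → Equiv.Perm (Fin 3) := fun k => if k = i then a else b with hf
  have := congrArg (FreeGroup.lift f) hc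
  simp only [map_mul, FreeGroup.lift_apply_of, hf] at this
  simp only [if_true, if_neg (Ne.symm hij)] at this
  have : a * b = b * a := this
  rw [ha, hb] at this
  have h0 := congrArg (fun e : Equiv.Perm (Fin 3) => e 0) this
  revert h0; decide

/-- Commuting elements of a free group are powers of a common element. -/
theorem stmt_10 {α : Type*} (x y : FreeGroup α) (h : Commute x y) :
    ∃ (z : FreeGroup α) (m n : ℤ), x = z ^ m ∧ y = z ^ n := by
  set H := Subgroup.closure ({x, y} : Set (FreeGroup α)) with hH
  have hcomm : ∀ a ∈ ({x, y} : Set (FreeGroup α)), ∀ b ∈ ({x, y} : Set (FreeGroup α)),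
      a * b = b * a := by
    rintro a (rfl | rfl) b (rfl | rfl) <;> first | rfl | exact h | exact h.symm
  letI : CommGroup H := Subgroup.closureCommGroupOfComm hcomm
  have hx : x ∈ H := Subgroup.subset_closure (by simp)
  have hy : y ∈ H := Subgroup.subset_closure (by simp)
  obtain ⟨ι, ⟨b⟩⟩ := (subgroupIsFreeOfIsFree H).nonempty_basis
  have hsub : Subsingleton ι := by
    constructor
    intro i j
    by_contra hij
    apply aux_notcomm hij
    have : Commute (b i) (b j) := mul_comm _ _
    have := congrArg b.repr this.eq
    simp only [map_mul, b.repr_apply_coe] at this; exact this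
  cases isEmpty_or_nonempty ι with
  | inl hE =>
      refine ⟨1, 0, 0, ?_, ?_⟩ <;> [skip; skip] <;>
      · simp only [zpow_zero]
        haveI : Subsingleton (FreeGroup ι) := Unique.instSubsingleton
        haveI : Subsingleton H := b.repr.toEquiv.subsingleton
        first
        | exact congrArg Subtype.val (Subsingleton.elim (⟨x, hx⟩ : H) 1)
        | exact congrArg Subtype.val (Subsingleton.elim (⟨y, hy⟩ : H) 1)
  | inr hNE =>
      obtain ⟨i⟩ := hNE
      obtain ⟨m, hm⟩ := aux_zpow i (b.repr ⟨x, hx⟩)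
      obtain ⟨n, hn⟩ := aux_zpow i (b.repr ⟨y, hy⟩)
      refine ⟨(b i : FreeGroup α), m, n, ?_, ?_⟩
      · have := congrArg b.repr.symm hm
        simp only [MulEquiv.symm_apply_apply, map_zpow] at this
        have : (⟨x, hx⟩ : H) = (b.repr.symm (FreeGroup.of i)) ^ m := this
        exact congrArg Subtype.val this
      · have := congrArg b.repr.symm hn
        simp only [MulEquiv.symm_apply_apply, map_zpow] at this
        have : (⟨y, hy⟩ : H) = (b.repr.symm (FreeGroup.of i)) ^ n := this
        exact congrArg Subtype.val this
end
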